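/- Let ∂Δ^n be the boundary of the n-simplex, v one of its vertices, π(v) the complementary facet (the face opposite v), and ℓ a leaf attached at v. Then M(∂Δ^n ∨_v ℓ) strongly collapses to a complex isomorphic to M((∂Δ^n − π(v)) ⊔ ℓ), where ∂Δ^n − π(v) denotes the complex with the facet π(v) removed. -/

import Mathlib

open Finset

/-- An abstract simplicial complex on vertex type `V`. -/
structure SComplex (V : Type*) where
  faces : Finset V → Prop
  not_empty : ¬ faces ∅
  down_closed : ∀ {σ τ : Finset V}, faces τ → σ ⊆ τ → σ.Nonempty → faces σ

/-- The complex generated by a set of simplices (downward closure). -/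
def ofGens {V : Type*} (gens : Set (Finset V)) : SComplex V where
  faces σ := σ.Nonempty ∧ ∃ τ ∈ gens, σ ⊆ τ
  not_empty h := by simpa using h.1
  down_closed := by
    rintro σ τ ⟨-, τ', hτ', hsub'⟩ hsub hne
    exact ⟨hne, τ', hτ', hsub.trans hsub'⟩

/-- A primitive (gradient) vector field on `K`: a single regular pair `(σ, τ)`
with `σ` a codimension-one face of `τ`. -/
structure VPair {V : Type*} (K : SComplex V) where
  lo : Finset V
  hi : Finset V
  lo_face : K.faces lo
  hi_face : K.faces hi
  lo_sub : lo ⊆ hi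
  card_eq : hi.card = lo.card + 1

noncomputable instance {V : Type*} (K : SComplex V) : DecidableEq (VPair K) :=
  Classical.decEq _

/-- Two primitive pairs share no simplex. -/
def VPair.Compatible {V : Type*} {K : SComplex V} (p q : VPair K) : Prop :=
  p.lo ≠ q.lo ∧ p.lo ≠ q.hi ∧ p.hi ≠ q.lo ∧ p.hi ≠ q.hi

/-- A discrete vector field: each simplex occurs in at most one pair. -/
def IsDVF {V : Type*} {K : SComplex V} (W : Set (VPair K)) : Prop :=
  ∀ p ∈ W, ∀ q ∈ W, p ≠ q → VPair.Compatible p q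

/-- Existence of a nontrivial closed `V`-path. -/
def HasClosedPath {V : Type*} {K : SComplex V} (W : Set (VPair K)) : Prop :=
  ∃ k : ℕ, 0 < k ∧ ∃ c : ZMod k → VPair K, (∀ i, c i ∈ W) ∧
    ∀ i, (c (i + 1)).lo ⊆ (c i).hi ∧ (c (i + 1)).lo ≠ (c i).lo ∧
      (c (i + 1)).lo.card + 1 = (c i).hi.card

/-- A gradient vector field: a discrete vector field with no nontrivial closed path. -/
def IsGVF {V : Type*} {K : SComplex V} (W : Set (VPair K)) : Prop :=
  IsDVF W ∧ ¬ HasClosedPath W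

/-- The Morse complex of `K`: vertices are primitive gradient vector fields,
simplices are gradient vector fields. -/
def MorseComplex {V : Type*} (K : SComplex V) : SComplex (VPair K) where
  faces S := S.Nonempty ∧ IsGVF {p | p ∈ S}
  not_empty h := by simpa using h.1
  down_closed := by
    rintro σ τ ⟨hne', hdvf, hnc⟩ hsub hne
    refine ⟨hne, fun p hp q hq hpq => hdvf p (hsub hp) q (hsub hq) hpq, fun h => hnc ?_⟩
    obtain ⟨k, hk, c, hc, hpath⟩ := h
    exact ⟨k, hk, c, fun i => hsub (hc i), hpath⟩

/-- The pure Morse complex: the subcomplex of `MorseComplex K` generated by the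
facets of maximum dimension (maximum gradient vector fields). -/
def pureMorse {V : Type*} (K : SComplex V) : SComplex (VPair K) where
  faces S := (MorseComplex K).faces S ∧ ∃ T : Finset (VPair K), S ⊆ T ∧
      (MorseComplex K).faces T ∧
      ∀ T' : Finset (VPair K), (MorseComplex K).faces T' → T'.card ≤ T.card
  not_empty h := (MorseComplex K).not_empty h.1
  down_closed := by
    rintro σ τ ⟨hτ, T, hsub', hT, hmax⟩ hsub hne
    exact ⟨(MorseComplex K).down_closed hτ hsub hne, T, hsub.trans hsub', hT, hmax⟩

/-- `σ` is a facet (maximal simplex) of `K`. -/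
def IsFacet {V : Type*} (K : SComplex V) (σ : Finset V) : Prop :=
  K.faces σ ∧ ∀ τ, K.faces τ → σ ⊆ τ → σ = τ

/-- `w` dominates `w'`: every facet containing `w'` contains `w`. -/
def Dominates {V : Type*} (K : SComplex V) (w w' : V) : Prop :=
  ∀ σ, IsFacet K σ → w' ∈ σ → w ∈ σ

/-- `K` is minimal: no vertex dominates another vertex. -/
def MinimalComplex {V : Type*} (K : SComplex V) : Prop :=
  ∀ w w' : V, K.faces {w} → K.faces {w'} → w ≠ w' → ¬ Dominates K w w'

/-- Strong collapsibility of a face predicate: a sequence of removals of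
dominated vertices reaching a single point. -/
inductive SCAux {V : Type*} : (Finset V → Prop) → Prop
  | point (F : Finset V → Prop) (v : V) (h : ∀ σ, F σ ↔ σ = {v}) : SCAux F
  | step (F : Finset V → Prop) (w w' : V) (hne : w ≠ w') (hw : F {w}) (hw' : F {w'})
      (hdom : ∀ σ, (F σ ∧ ∀ τ, F τ → σ ⊆ τ → σ = τ) → w' ∈ σ → w ∈ σ)
      (h : SCAux (fun σ => F σ ∧ w' ∉ σ)) : SCAux F

def StronglyCollapsible {V : Type*} (K : SComplex V) : Prop := SCAux K.faces

/-- `F` strongly collapses to `G` by a sequence of removals of dominated vertices. -/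
inductive SCTo {V : Type*} : (Finset V → Prop) → (Finset V → Prop) → Prop
  | refl (F : Finset V → Prop) : SCTo F F
  | step (F G : Finset V → Prop) (w w' : V) (hne : w ≠ w') (hw : F {w}) (hw' : F {w'})
      (hdom : ∀ σ, (F σ ∧ ∀ τ, F τ → σ ⊆ τ → σ = τ) → w' ∈ σ → w ∈ σ)
      (h : SCTo (fun σ => F σ ∧ w' ∉ σ) G) : SCTo F G

/-- Collapsibility (Forman): removal of free pairs down to a point. -/
inductive CollAux {V : Type*} : (Finset V → Prop) → Prop
  | point (F : Finset V → Prop) (v : V) (h : ∀ σ, F σ ↔ σ = {v}) : CollAux F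
  | step (F : Finset V → Prop) (σ τ : Finset V) (hστ : σ ⊂ τ) (hσ : F σ) (hτ : F τ)
      (hfree : ∀ ρ, F ρ → σ ⊂ ρ → ρ = τ)
      (h : CollAux (fun ρ => F ρ ∧ ρ ≠ σ ∧ ρ ≠ τ)) : CollAux F

def Collapsible {V : Type*} (K : SComplex V) : Prop := CollAux K.faces

/-- The degree of a vertex: the number of edges of `K` containing it. -/
noncomputable def sdeg {V : Type*} (K : SComplex V) (x : V) : ℕ :=
  Set.ncard {σ : Finset V | K.faces σ ∧ σ.card = 2 ∧ x ∈ σ}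

/-- Image of a finset, with a classical decidability instance. -/
noncomputable def fimage {V W : Type*} (f : V → W) (σ : Finset V) : Finset W :=
  haveI := Classical.decEq W
  σ.image f

/-- An isomorphism between two simplicial complexes given by face predicates. -/
structure ComplexIso {V W : Type*} (F : Finset V → Prop) (G : Finset W → Prop) where
  toFun : V → W
  invFun : W → V
  left_inv : ∀ x, F {x} → invFun (toFun x) = x
  right_inv : ∀ y, G {y} → toFun (invFun y) = y
  map_face : ∀ σ, F σ → G (fimage toFun σ)
  inv_face : ∀ τ, G τ → F (fimage invFun τ)

/-- The join of two simplicial complexes. -/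
def sJoin {V W : Type*} [DecidableEq V] [DecidableEq W] (K : SComplex V) (L : SComplex W) :
    SComplex (V ⊕ W) :=
  ofGens {σ | ∃ α β, (K.faces α ∨ α = ∅) ∧ (L.faces β ∨ β = ∅) ∧
    σ = α.image Sum.inl ∪ β.image Sum.inr}

/-- The disjoint union of two simplicial complexes. -/
def sDisjUnion {V W : Type*} [DecidableEq V] [DecidableEq W] (K : SComplex V) (L : SComplex W) :
    SComplex (V ⊕ W) :=
  ofGens ({σ | ∃ α, K.faces α ∧ σ = α.image Sum.inl} ∪
          {σ | ∃ β, L.faces β ∧ σ = β.image Sum.inr})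

/-- The simplicial complex of a simple graph (vertices and edges). -/
def graphComplex {V : Type*} [DecidableEq V] (G : SimpleGraph V) : SComplex V :=
  ofGens ({σ | ∃ x, σ = {x}} ∪ {σ | ∃ x y, G.Adj x y ∧ σ = ({x, y} : Finset V)})

/-- Attach a leaf (pendant edge) to `K` at the vertex `x`. -/
def attachLeaf {V : Type*} [DecidableEq V] (K : SComplex V) (x : V) : SComplex (V ⊕ Unit) :=
  ofGens ({σ | ∃ α, K.faces α ∧ σ = α.image Sum.inl} ∪
          {({Sum.inl x, Sum.inr ()} : Finset (V ⊕ Unit))})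

/-- The cycle graph on `ZMod n`. -/
def cycleGraph (n : ℕ) : SimpleGraph (ZMod n) :=
  SimpleGraph.fromRel (fun i j => j = i + 1)

/-- Attach one new leaf to every vertex of a graph. -/
def addLeaves {V : Type*} [DecidableEq V] (G : SimpleGraph V) : SComplex (V ⊕ V) :=
  ofGens ({σ | ∃ x y, G.Adj x y ∧ σ = ({Sum.inl x, Sum.inl y} : Finset (V ⊕ V))} ∪
          {σ | ∃ u, σ = ({Sum.inl u, Sum.inr u} : Finset (V ⊕ V))})

/-- The geometric realization of `K`, inside `V → ℝ`. -/
def realization {V : Type*} (K : SComplex V) : Set (V → ℝ) :=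
  {f | ∃ σ, K.faces σ ∧ (∀ x, 0 ≤ f x) ∧ (∀ x, f x ≠ 0 → x ∈ σ) ∧ ∑ x ∈ σ, f x = 1}

/-- A Hasse-diagram edge of a poset: a covering pair. -/
structure HEdge (P : Type*) [PartialOrder P] where
  lo : P
  hi : P
  cov : lo ⋖ hi

noncomputable instance {P : Type*} [PartialOrder P] : DecidableEq (HEdge P) :=
  Classical.decEq _

def HEdge.Compat {P : Type*} [PartialOrder P] (p q : HEdge P) : Prop :=
  p.lo ≠ q.lo ∧ p.lo ≠ q.hi ∧ p.hi ≠ q.lo ∧ p.hi ≠ q.hi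

def HasPosetCycle {P : Type*} [PartialOrder P] (W : Set (HEdge P)) : Prop :=
  ∃ k : ℕ, 0 < k ∧ ∃ c : ZMod k → HEdge P, (∀ i, c i ∈ W) ∧
    ∀ i, (c (i + 1)).lo ⋖ (c i).hi ∧ (c (i + 1)).lo ≠ (c i).lo

/-- The generalized Morse complex `f(P)` of a poset: simplices are acyclic
matchings of the Hasse diagram of `P`. -/
def genMorse (P : Type*) [PartialOrder P] : SComplex (HEdge P) where
  faces S := S.Nonempty ∧ (∀ p ∈ S, ∀ q ∈ S, p ≠ q → HEdge.Compat p q) ∧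
    ¬ HasPosetCycle {p | p ∈ S}
  not_empty h := by simpa using h.1
  down_closed := by
    rintro σ τ ⟨-, hm, hc⟩ hsub hne
    refine ⟨hne, fun p hp q hq h => hm p (hsub hp) q (hsub hq) h, fun h => hc ?_⟩
    obtain ⟨k, hk, c, hc', hp⟩ := h
    exact ⟨k, hk, c, fun i => hsub (hc' i), hp⟩

/-- The automorphism group of a simplicial complex, as a subgroup of `Perm V`. -/
def autGroup {V : Type*} [DecidableEq V] (K : SComplex V) : Subgroup (Equiv.Perm V) where
  carrier := {e | ∀ σ : Finset V, K.faces σ ↔ K.faces (σ.image e)}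
  one_mem' := by intro σ; simp
  mul_mem' := by
    intro a b ha hb σ
    rw [hb σ, ha (σ.image b)]
    simp [Finset.image_image, Equiv.Perm.coe_mul]
  inv_mem' := by
    intro a ha σ
    have := ha (σ.image ⇑a⁻¹)
    simpa [Finset.image_image, Function.comp_def,
      Finset.image_id'] using this.symm

/-- The full subcomplex of `K` on a set `S` of vertices. -/
def restrictTo {V : Type*} (K : SComplex V) (S : Set V) : Finset V → Prop :=
  fun σ => K.faces σ ∧ ∀ x ∈ σ, x ∈ S

/-- `S` spans a fully connected subcomplex: `K = (K∣S) * (K∣Sᶜ)`. -/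
def FullyConnected {V : Type*} [DecidableEq V] (K : SComplex V) (S : Set V) : Prop :=
  ∀ σ : Finset V, K.faces σ ↔ (σ.Nonempty ∧ ∃ α β : Finset V,
    (restrictTo K S α ∨ α = ∅) ∧ ((K.faces β ∧ ∀ x ∈ β, x ∉ S) ∨ β = ∅) ∧ σ = α ∪ β)

/-- The primitive pair `(x, xy)` on an edge `{x,y}`. -/
def edgePair {V : Type*} [DecidableEq V] (K : SComplex V) (x y : V) (hxy : x ≠ y)
    (h : K.faces {x, y}) : VPair K where
  lo := {x}
  hi := {x, y}
  lo_face := K.down_closed h (by simp) (Finset.singleton_nonempty x)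
  hi_face := h
  lo_sub := by simp
  card_eq := by
    rw [Finset.card_singleton, Finset.card_insert_of_notMem (by simp [hxy]),
      Finset.card_singleton]

/-- The boundary of the `n`-simplex. -/
def bdry (n : ℕ) : SComplex (Fin (n + 1)) :=
  ofGens {σ | ∃ v : Fin (n + 1), σ = Finset.univ.erase v}

/-- The boundary of the `n`-simplex with the facet opposite `v` removed. -/
def bdryMinus (n : ℕ) (v : Fin (n + 1)) : SComplex (Fin (n + 1)) :=
  ofGens {σ | ∃ w : Fin (n + 1), w ≠ v ∧ σ = Finset.univ.erase w}

/-!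
Write `u` for the tip of the leaf `ℓ = vu`. In `M(∂Δⁿ ∨_v ℓ)` every pair `({v}, vw)` of `∂Δⁿ`
is dominated by the pair `(u, vu)`: a gradient field containing `({v}, vw)` cannot contain
`(v, vu)`, and then `(u, vu)` can be added, being compatible with every pair of `∂Δⁿ` and a
source of every V-path. Removing these pairs one at a time is a strong collapse.

The remaining pairs are the two pairs of the leaf and the pairs of `∂Δⁿ` not using the vertex
`{v}`. The reflection `π : σ ↦ δ − σ` maps the latter bijectively onto the pairs of
`∂Δⁿ − π(v)`, reversing each pair, hence each V-path; with the identity on the leaf it induces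
the isomorphism with `M((∂Δⁿ − π(v)) ⊔ ℓ)`. The leaf pairs never lie on a closed V-path of a
gradient field, so they do not obstruct the reversal.
-/

open Sum (inl inr)

namespace SComplex

variable {V : Type*} {K : SComplex V} {σ : Finset V}

lemma nonempty_of_faces (h : K.faces σ) : σ.Nonempty :=
  nonempty_iff_ne_empty.2 fun h' => K.not_empty (h' ▸ h)

end SComplex

lemma mem_fimage {α β : Type*} {f : α → β} {s : Finset α} {y : β} :
    y ∈ fimage f s ↔ ∃ x ∈ s, f x = y :=
  @mem_image _ _ (Classical.decEq β) _ _ _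

lemma Finset.inr_notMem_of_toRight_eq_empty {α β : Type*} {u : Finset (α ⊕ β)}
    (h : u.toRight = ∅) (b : β) : inr b ∉ u :=
  fun hb => by simpa [h] using mem_toRight.2 hb

lemma Finset.toLeft_nonempty_of_toRight_eq_empty {α β : Type*} {u : Finset (α ⊕ β)}
    (h : u.toRight = ∅) (hu : u.Nonempty) : u.toLeft.Nonempty := by
  rw [← card_pos] at hu ⊢
  have := card_toLeft_add_card_toRight (u := u)
  simp only [h, card_empty] at this
  omega

namespace VPair

variable {V : Type*} {K : SComplex V}

@[ext] lemma ext {p q : VPair K} (hlo : p.lo = q.lo) (hhi : p.hi = q.hi) : p = q := by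
  cases p; cases q; cases hlo; cases hhi; rfl

instance [Finite V] : Finite (VPair K) :=
  Finite.of_injective (fun p => (p.lo, p.hi)) fun _ _ h =>
    ext (congrArg Prod.fst h) (congrArg Prod.snd h)

lemma lo_nonempty (p : VPair K) : p.lo.Nonempty := K.nonempty_of_faces p.lo_face

lemma one_lt_card_hi (p : VPair K) : 1 < #p.hi := by
  have := p.lo_nonempty.card_pos
  have := p.card_eq
  omega

/-- The step condition of `HasClosedPath`: `q` may follow `p` on a V-path. -/
def Precedes (p q : VPair K) : Prop :=
  q.lo ⊆ p.hi ∧ q.lo ≠ p.lo ∧ #q.lo + 1 = #p.hi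

lemma Precedes.ne {p q : VPair K} (h : p.Precedes q) : p ≠ q := by
  rintro rfl
  exact h.2.1 rfl

lemma Compatible.symm {p q : VPair K} (h : p.Compatible q) : q.Compatible p :=
  ⟨h.1.symm, h.2.2.1.symm, h.2.1.symm, h.2.2.2.symm⟩

lemma compatible_of_mem_of_notMem {p q : VPair K} {x : V} (hp : x ∈ p.lo) (hq : x ∉ q.hi) :
    p.Compatible q := by
  have hp' : x ∈ p.hi := p.lo_sub hp
  have hq' : x ∉ q.lo := fun h => hq (q.lo_sub h)
  exact ⟨fun e => hq' (e ▸ hp), fun e => hq (e ▸ hp), fun e => hq' (e ▸ hp'),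
    fun e => hq (e ▸ hp')⟩

lemma toRight_lo_eq_empty {α β : Type*} {K : SComplex (α ⊕ β)} {p : VPair K}
    (h : p.hi.toRight = ∅) : p.lo.toRight = ∅ :=
  subset_empty.1 (h ▸ toRight_subset_toRight p.lo_sub)

variable [DecidableEq V]

lemma eq_edgePair_of_hi_subset {x y : V} (hxy : x ≠ y) (hx : K.faces {x, y})
    (hy : K.faces {y, x}) {p : VPair K} (hp : p.hi ⊆ {x, y}) :
    p = edgePair K x y hxy hx ∨ p = edgePair K y x hxy.symm hy := by
  have hhi : p.hi = {x, y} :=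
    eq_of_subset_of_card_le hp (by rw [card_pair hxy]; exact p.one_lt_card_hi)
  have hlo : #p.lo = 1 := by have := p.card_eq; rw [hhi, card_pair hxy] at this; omega
  obtain ⟨z, hz⟩ := card_eq_one.1 hlo
  have hzxy : z ∈ ({x, y} : Finset V) := hhi ▸ p.lo_sub (hz ▸ mem_singleton_self z)
  rcases mem_insert.1 hzxy with rfl | hzy
  · exact Or.inl (ext hz hhi)
  · rw [mem_singleton] at hzy
    subst hzy
    exact Or.inr (ext hz (hhi.trans (pair_comm _ _)))

lemma lo_eq_of_edgePair_precedes {x y : V} {hxy : x ≠ y} {hx : K.faces {x, y}} {q : VPair K}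
    (h : (edgePair K x y hxy hx).Precedes q) : q.lo = {y} := by
  obtain ⟨hsub, hne, hcard⟩ := h
  have hlo : #q.lo = 1 := by simp only [edgePair, card_pair hxy] at hcard; omega
  obtain ⟨z, hz⟩ := card_eq_one.1 hlo
  have hzxy : z ∈ ({x, y} : Finset V) := hsub (hz ▸ mem_singleton_self z)
  rcases mem_insert.1 hzxy with rfl | hzy
  · exact absurd hz hne
  · rwa [mem_singleton.1 hzy] at hz

end VPair

namespace MorseComplex

variable {V W : Type*} {K : SComplex V} {L : SComplex W}

lemma faces_singleton (p : VPair K) : (MorseComplex K).faces {p} := by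
  refine ⟨singleton_nonempty p, fun a ha b hb hab => absurd ((mem_singleton.1 ha).trans
    (mem_singleton.1 hb).symm) hab, ?_⟩
  rintro ⟨k, -, c, hc, hpath⟩
  exact (hpath 0).2.1 (by rw [mem_singleton.1 (hc 0), mem_singleton.1 (hc (0 + 1))])

/-- `p` is a source of every V-path, hence lies on no closed one. -/
lemma faces_insert {S : Finset (VPair K)} {p : VPair K} (hS : (MorseComplex K).faces S)
    (hcomp : ∀ q ∈ S, p.Compatible q) (hsrc : ∀ q ∈ S, ¬ p.lo ⊆ q.hi) :
    (MorseComplex K).faces (insert p S) := by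
  obtain ⟨-, hdvf, hcyc⟩ := hS
  refine ⟨insert_nonempty _ _, ?_, ?_⟩
  · intro a ha b hb hab
    replace ha := mem_insert.1 ha
    replace hb := mem_insert.1 hb
    rcases ha with rfl | ha <;> rcases hb with rfl | hb
    · exact absurd rfl hab
    · exact hcomp b hb
    · exact (hcomp a ha).symm
    · exact hdvf a ha b hb hab
  · rintro ⟨k, hk, c, hc, hpath⟩
    refine hcyc ⟨k, hk, c, fun i => (mem_insert.1 (hc i)).resolve_left fun hi => ?_, hpath⟩
    have hstep : (c (i - 1)).Precedes p := by
      have := hpath (i - 1)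
      rwa [sub_add_cancel, hi] at this
    rcases mem_insert.1 (hc (i - 1)) with h | h
    · exact hstep.ne h
    · exact hsrc _ h hstep.1

/-- A closed V-path in the image lifts, read backwards, to one in `S`. -/
theorem faces_fimage (f : VPair K → VPair L) {S : Finset (VPair K)}
    (hS : (MorseComplex K).faces S) (Q : VPair K → Prop)
    (hcomp : ∀ a ∈ S, ∀ b ∈ S, a.Compatible b → (f a).Compatible (f b))
    (hdead : ∀ a ∈ S, ∀ b ∈ S, (f a).Precedes (f b) → Q a)
    (hrev : ∀ a ∈ S, ∀ b ∈ S, Q a → Q b → (f a).Precedes (f b) → b.Precedes a) :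
    (MorseComplex L).faces (fimage f S) := by
  obtain ⟨⟨p, hp⟩, hdvf, hcyc⟩ := hS
  refine ⟨⟨f p, mem_fimage.2 ⟨p, hp, rfl⟩⟩, ?_, ?_⟩
  · intro x hx y hy hxy
    obtain ⟨a, ha, rfl⟩ := mem_fimage.1 hx
    obtain ⟨b, hb, rfl⟩ := mem_fimage.1 hy
    exact hcomp a ha b hb (hdvf a ha b hb fun h => hxy (h ▸ rfl))
  · rintro ⟨k, hk, c, hc, hpath⟩
    choose g hgS hgc using fun i => mem_fimage.1 (hc i)
    have hstep : ∀ i, (f (g i)).Precedes (f (g (i + 1))) := fun i => by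
      rw [hgc, hgc]
      exact hpath i
    refine hcyc ⟨k, hk, fun i => g (-i), fun i => hgS _, fun i => ?_⟩
    have h := hstep (-(i + 1))
    rw [show -(i + 1) + 1 = -i by ring] at h
    exact hrev _ (hgS _) _ (hgS _) (hdead _ (hgS _) _ (hgS _) h)
      (hdead _ (hgS _) _ (hgS _) (hstep (-i))) h

end MorseComplex

/-- `w` dominates each `b ∈ B`: adding `w` to a facet containing `b` does not enlarge it. -/
theorem SCTo.of_absorbing {V : Type*} [DecidableEq V] {F : Finset V → Prop} {w : V}
    (hw : F {w}) {B : Finset V} (hwB : w ∉ B) (hB : ∀ b ∈ B, F {b})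
    (habs : ∀ b ∈ B, ∀ σ, F σ → b ∈ σ → F (insert w σ)) :
    SCTo F (fun σ => F σ ∧ Disjoint σ B) := by
  induction B using Finset.induction_on generalizing F with
  | empty => simpa using SCTo.refl F
  | insert a B haB ih =>
    have hwa : w ≠ a := by
      rintro rfl
      exact hwB (mem_insert_self w B)
    refine SCTo.step F _ w a hwa hw (hB a (mem_insert_self a B)) ?_ ?_
    · rintro σ ⟨hσ, hmax⟩ haσ
      rw [hmax _ (habs a (mem_insert_self a B) σ hσ haσ) (subset_insert w σ)]
      exact mem_insert_self w σ
    · have h := ih (F := fun σ => F σ ∧ a ∉ σ) ⟨hw, by simpa using hwa.symm⟩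
        (fun h => hwB (mem_insert_of_mem h))
        (fun b hb => ⟨hB b (mem_insert_of_mem hb), by
          simpa using ne_of_mem_of_not_mem hb haB |>.symm⟩)
        (fun b hb σ hσ hbσ => ⟨habs b (mem_insert_of_mem hb) σ hσ.1 hbσ, by
          simpa [hwa.symm] using hσ.2⟩)
      simpa only [disjoint_insert_right, and_assoc] using h

section Faces

variable {V W : Type*} [DecidableEq V] [DecidableEq W]

lemma Finset.subset_image_inl_iff {σ : Finset (V ⊕ W)} {α : Finset V} :
    σ ⊆ α.image inl ↔ σ.toLeft ⊆ α ∧ σ.toRight = ∅ := by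
  rw [← subset_map_inl, map_eq_image]
  rfl

lemma Finset.subset_image_inr_iff {σ : Finset (V ⊕ W)} {β : Finset W} :
    σ ⊆ β.image inr ↔ σ.toLeft = ∅ ∧ σ.toRight ⊆ β := by
  rw [← subset_map_inr, map_eq_image]
  rfl

lemma attachLeaf_faces {K : SComplex V} {x : V} {σ : Finset (V ⊕ Unit)} :
    (attachLeaf K x).faces σ ↔
      σ.Nonempty ∧ σ ⊆ {inl x, inr ()} ∨ σ.toRight = ∅ ∧ K.faces σ.toLeft := by
  simp only [attachLeaf, ofGens, Set.mem_union, Set.mem_singleton_iff]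
  constructor
  · rintro ⟨hne, τ, ⟨α, hα, rfl⟩ | rfl, hsub⟩
    · obtain ⟨hl, hr⟩ := subset_image_inl_iff.1 hsub
      exact Or.inr ⟨hr, K.down_closed hα hl (toLeft_nonempty_of_toRight_eq_empty hr hne)⟩
    · exact Or.inl ⟨hne, hsub⟩
  · rintro (⟨hne, hsub⟩ | ⟨hr, hK⟩)
    · exact ⟨hne, _, Or.inr rfl, hsub⟩
    · refine ⟨?_, _, Or.inl ⟨_, hK, rfl⟩, subset_image_inl_iff.2 ⟨Subset.rfl, hr⟩⟩
      obtain ⟨a, ha⟩ := K.nonempty_of_faces hK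
      exact ⟨_, mem_toLeft.1 ha⟩

lemma attachLeaf_faces_leaf {K : SComplex V} {x : V} :
    (attachLeaf K x).faces {inl x, inr ()} :=
  attachLeaf_faces.2 (Or.inl ⟨insert_nonempty _ _, Subset.rfl⟩)

lemma sDisjUnion_faces {K : SComplex V} {L : SComplex W} {σ : Finset (V ⊕ W)} :
    (sDisjUnion K L).faces σ ↔
      σ.toRight = ∅ ∧ K.faces σ.toLeft ∨ σ.toLeft = ∅ ∧ L.faces σ.toRight := by
  simp only [sDisjUnion, ofGens, Set.mem_union]
  constructor
  · rintro ⟨hne, τ, ⟨α, hα, rfl⟩ | ⟨β, hβ, rfl⟩, hsub⟩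
    · obtain ⟨hl, hr⟩ := subset_image_inl_iff.1 hsub
      exact Or.inl ⟨hr, K.down_closed hα hl (toLeft_nonempty_of_toRight_eq_empty hr hne)⟩
    · obtain ⟨hl, hr⟩ := subset_image_inr_iff.1 hsub
      refine Or.inr ⟨hl, L.down_closed hβ hr ?_⟩
      obtain ⟨y, hy⟩ := hne
      rcases y with a | b
      · simpa [hl] using mem_toLeft.2 hy
      · exact ⟨b, mem_toRight.2 hy⟩
  · rintro (⟨hr, hK⟩ | ⟨hl, hL⟩)
    · obtain ⟨a, ha⟩ := K.nonempty_of_faces hK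
      exact ⟨⟨_, mem_toLeft.1 ha⟩, _, Or.inl ⟨_, hK, rfl⟩,
        subset_image_inl_iff.2 ⟨Subset.rfl, hr⟩⟩
    · obtain ⟨b, hb⟩ := L.nonempty_of_faces hL
      exact ⟨⟨_, mem_toRight.1 hb⟩, _, Or.inr ⟨_, hL, rfl⟩,
        subset_image_inr_iff.2 ⟨hl, Subset.rfl⟩⟩

lemma sDisjUnion_faces_of_toRight_eq_empty {K : SComplex V} {L : SComplex W}
    {σ : Finset (V ⊕ W)} (hr : σ.toRight = ∅) :
    (sDisjUnion K L).faces σ ↔ K.faces σ.toLeft := by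
  rw [sDisjUnion_faces, hr]
  exact ⟨fun h => (h.resolve_right fun h => L.not_empty h.2).2, fun h => Or.inl ⟨rfl, h⟩⟩

lemma graphComplex_faces_of_adj {G : SimpleGraph V} {x y : V} (h : G.Adj x y) :
    (graphComplex G).faces {x, y} :=
  ⟨insert_nonempty _ _, _, Or.inr ⟨x, y, h, rfl⟩, Subset.rfl⟩

end Faces

lemma Finset.compl_nonempty_iff {α : Type*} [Fintype α] [DecidableEq α] {s : Finset α} :
    sᶜ.Nonempty ↔ s ≠ univ := by
  rw [nonempty_iff_ne_empty, Ne, compl_eq_empty_iff]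

section Sphere

variable {n : ℕ} {v : Fin (n + 1)} {A : Finset (Fin (n + 1))}

lemma bdry_faces : (bdry n).faces A ↔ A.Nonempty ∧ A ≠ univ := by
  simp only [bdry, ofGens]
  constructor
  · rintro ⟨hne, _, ⟨w, rfl⟩, hsub⟩
    exact ⟨hne, fun h => (mem_erase.1 (hsub (h ▸ mem_univ w))).1 rfl⟩
  · rintro ⟨hne, hA⟩
    obtain ⟨w, hw⟩ := not_forall.1 (mt eq_univ_iff_forall.2 hA)
    exact ⟨hne, _, ⟨w, rfl⟩, fun x hx => mem_erase.2 ⟨by rintro rfl; exact hw hx, mem_univ x⟩⟩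

lemma bdryMinus_faces : (bdryMinus n v).faces A ↔ A.Nonempty ∧ ∃ w ≠ v, w ∉ A := by
  simp only [bdryMinus, ofGens]
  constructor
  · rintro ⟨hne, _, ⟨w, hwv, rfl⟩, hsub⟩
    exact ⟨hne, w, hwv, fun h => by simpa using hsub h⟩
  · rintro ⟨hne, w, hwv, hw⟩
    exact ⟨hne, _, ⟨w, hwv, rfl⟩, fun x hx => mem_erase.2 ⟨by rintro rfl; exact hw hx, mem_univ x⟩⟩

lemma bdry_faces_of_bdryMinus_faces (h : (bdryMinus n v).faces A) : (bdry n).faces A := by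
  obtain ⟨hne, w, -, hw⟩ := bdryMinus_faces.1 h
  exact bdry_faces.2 ⟨hne, fun h => hw (h ▸ mem_univ w)⟩

lemma bdry_faces_compl : (bdry n).faces Aᶜ ↔ (bdry n).faces A := by
  rw [bdry_faces, bdry_faces, compl_nonempty_iff, compl_ne_univ_iff_nonempty, and_comm]

lemma bdryMinus_faces_compl : (bdryMinus n v).faces Aᶜ ↔ (bdry n).faces A ∧ A ≠ {v} := by
  simp only [bdryMinus_faces, bdry_faces, compl_nonempty_iff, mem_compl, not_not, Ne,
    eq_singleton_iff_nonempty_unique_mem]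
  grind

end Sphere

section LeftCompl

variable {α β γ : Type*} [Fintype α] [DecidableEq α] {σ τ : Finset (α ⊕ β)}

/-- The reflection `π : σ ↦ δ − σ` on the `α`-part, landing in `α ⊕ γ`. -/
def Finset.leftCompl (σ : Finset (α ⊕ β)) : Finset (α ⊕ γ) := σ.toLeftᶜ.disjSum ∅

@[simp] lemma Finset.toLeft_leftCompl : (leftCompl σ : Finset (α ⊕ γ)).toLeft = σ.toLeftᶜ :=
  toLeft_disjSum

@[simp] lemma Finset.toRight_leftCompl : (leftCompl σ : Finset (α ⊕ γ)).toRight = ∅ :=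
  toRight_disjSum

lemma Finset.leftCompl_leftCompl (h : σ.toRight = ∅) :
    leftCompl (leftCompl σ : Finset (α ⊕ γ)) = σ := by
  rw [leftCompl, toLeft_leftCompl, compl_compl, ← h, toLeft_disjSum_toRight]

lemma Finset.leftCompl_subset_leftCompl (hτ : τ.toRight = ∅) :
    (leftCompl σ : Finset (α ⊕ γ)) ⊆ leftCompl τ ↔ τ ⊆ σ := by
  conv_rhs => rw [← toLeft_disjSum_toRight (u := τ), hτ]
  simp [leftCompl, map_inl_subset_iff_subset_toLeft]

lemma Finset.leftCompl_inj (hσ : σ.toRight = ∅) (hτ : τ.toRight = ∅) :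
    (leftCompl σ : Finset (α ⊕ γ)) = leftCompl τ ↔ σ = τ := by
  refine ⟨fun h => ?_, congrArg _⟩
  rw [← leftCompl_leftCompl (γ := γ) hσ, h, leftCompl_leftCompl hτ]

lemma Finset.card_leftCompl_add (h : σ.toRight = ∅) :
    #(leftCompl σ : Finset (α ⊕ γ)) + #σ = Fintype.card α := by
  rw [leftCompl, card_disjSum, card_empty, add_zero, ← card_toLeft_add_card_toRight (u := σ), h,
    card_empty, add_zero, card_compl_add_card]

end LeftCompl

namespace VPair

variable {α β γ : Type*} [Fintype α] [DecidableEq α] {K : SComplex (α ⊕ β)}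
  {L : SComplex (α ⊕ γ)}

def dual (p : VPair K) (hp : p.hi.toRight = ∅) (hlo : L.faces (leftCompl p.hi))
    (hhi : L.faces (leftCompl p.lo)) : VPair L where
  lo := leftCompl p.hi
  hi := leftCompl p.lo
  lo_face := hlo
  hi_face := hhi
  lo_sub := (leftCompl_subset_leftCompl (toRight_lo_eq_empty hp)).2 p.lo_sub
  card_eq := by
    have := card_leftCompl_add (γ := γ) hp
    have := card_leftCompl_add (γ := γ) (toRight_lo_eq_empty hp)
    have := p.card_eq
    omega

def IsDual (x : VPair L) (p : VPair K) : Prop :=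
  p.hi.toRight = ∅ ∧ x.lo = leftCompl p.hi ∧ x.hi = leftCompl p.lo

lemma dual_isDual (p : VPair K) (hp : p.hi.toRight = ∅) (hlo : L.faces (leftCompl p.hi))
    (hhi : L.faces (leftCompl p.lo)) : (p.dual hp hlo hhi).IsDual p :=
  ⟨hp, rfl, rfl⟩

namespace IsDual

variable {x y : VPair L} {p q : VPair K}

lemma toRight_hi (h : x.IsDual p) : x.hi.toRight = ∅ := by
  rw [h.2.2, toRight_leftCompl]

lemma symm (h : x.IsDual p) : p.IsDual x :=
  ⟨h.toRight_hi, by rw [h.2.2, leftCompl_leftCompl (toRight_lo_eq_empty h.1)],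
    by rw [h.2.1, leftCompl_leftCompl h.1]⟩

lemma unique (hx : x.IsDual p) (hy : y.IsDual p) : x = y :=
  ext (hx.2.1.trans hy.2.1.symm) (hx.2.2.trans hy.2.2.symm)

lemma compatible (hx : x.IsDual p) (hy : y.IsDual q) (h : p.Compatible q) : x.Compatible y := by
  obtain ⟨hp, hxlo, hxhi⟩ := hx
  obtain ⟨hq, hylo, hyhi⟩ := hy
  have hp' := toRight_lo_eq_empty hp
  have hq' := toRight_lo_eq_empty hq
  rw [Compatible, hxlo, hxhi, hylo, hyhi, Ne, Ne, Ne, Ne, leftCompl_inj hp hq,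
    leftCompl_inj hp hq', leftCompl_inj hp' hq, leftCompl_inj hp' hq']
  exact ⟨h.2.2.2, h.2.2.1, h.2.1, h.1⟩

lemma precedes (hx : x.IsDual p) (hy : y.IsDual q) (hpq : p.Compatible q) (h : x.Precedes y) :
    q.Precedes p := by
  obtain ⟨hp, hxlo, hxhi⟩ := hx
  obtain ⟨hq, hylo, hyhi⟩ := hy
  obtain ⟨hsub, -, hcard⟩ := h
  rw [hylo, hxhi, leftCompl_subset_leftCompl (toRight_lo_eq_empty hp)] at hsub
  rw [hylo, hxhi] at hcard
  have := card_leftCompl_add (γ := γ) hq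
  have := card_leftCompl_add (γ := γ) (toRight_lo_eq_empty hp)
  exact ⟨hsub, hpq.1, by omega⟩

end IsDual

end VPair

abbrev bdryWithLeaf (n : ℕ) (v : Fin (n + 1)) : SComplex (Fin (n + 1) ⊕ Unit) :=
  attachLeaf (bdry n) v

abbrev bdryMinusWithEdge (n : ℕ) (v : Fin (n + 1)) : SComplex (Fin (n + 1) ⊕ Fin 2) :=
  sDisjUnion (bdryMinus n v) (graphComplex (SimpleGraph.pathGraph 2))

namespace BdryWithLeaf

variable {n : ℕ} {v : Fin (n + 1)}

def stemPair : VPair (bdryWithLeaf n v) :=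
  edgePair _ (inl v) (inr ()) Sum.inl_ne_inr attachLeaf_faces_leaf

def tipPair : VPair (bdryWithLeaf n v) :=
  edgePair _ (inr ()) (inl v) Sum.inr_ne_inl (by rw [pair_comm]; exact attachLeaf_faces_leaf)

lemma faces_pathEdge : (bdryMinusWithEdge n v).faces {inr 0, inr 1} := by
  refine sDisjUnion_faces.2 (Or.inr ⟨by ext; simp, ?_⟩)
  convert graphComplex_faces_of_adj (SimpleGraph.pathGraph_adj.2 (Or.inl rfl) :
    (SimpleGraph.pathGraph 2).Adj 0 1) using 1
  ext; simp

def pathPair₀ : VPair (bdryMinusWithEdge n v) :=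
  edgePair (bdryMinusWithEdge n v) (inr 0) (inr 1) (by simp) faces_pathEdge

def pathPair₁ : VPair (bdryMinusWithEdge n v) :=
  edgePair (bdryMinusWithEdge n v) (inr 1) (inr 0) (by simp)
    (by rw [pair_comm]; exact faces_pathEdge)

lemma stemPair_ne_tipPair : (stemPair : VPair (bdryWithLeaf n v)) ≠ tipPair := fun h => by
  simpa [stemPair, tipPair, edgePair] using congrArg VPair.lo h

lemma pathPair₀_ne_pathPair₁ : (pathPair₀ : VPair (bdryMinusWithEdge n v)) ≠ pathPair₁ :=
  fun h => by simpa [pathPair₀, pathPair₁, edgePair] using congrArg VPair.lo h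

lemma not_compatible_stemPair_tipPair :
    ¬ (stemPair : VPair (bdryWithLeaf n v)).Compatible tipPair :=
  fun h => h.2.2.2 (pair_comm _ _)

lemma not_compatible_pathPair₀_pathPair₁ :
    ¬ (pathPair₀ : VPair (bdryMinusWithEdge n v)).Compatible pathPair₁ :=
  fun h => h.2.2.2 (pair_comm _ _)

lemma eq_stemPair_or_eq_tipPair_or (p : VPair (bdryWithLeaf n v)) :
    p = stemPair ∨ p = tipPair ∨ p.hi.toRight = ∅ := by
  refine or_assoc.1 (or_iff_not_imp_right.2 fun hr => VPair.eq_edgePair_of_hi_subset _ _ _ ?_)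
  exact (attachLeaf_faces.1 p.hi_face).elim And.right fun h => absurd h.1 hr

lemma eq_pathPair₀_or_eq_pathPair₁_or (q : VPair (bdryMinusWithEdge n v)) :
    q = pathPair₀ ∨ q = pathPair₁ ∨ q.hi.toRight = ∅ := by
  refine or_assoc.1 (or_iff_not_imp_right.2 fun hr => VPair.eq_edgePair_of_hi_subset _ _ _ ?_)
  have hl : q.hi.toLeft = ∅ := ((sDisjUnion_faces.1 q.hi_face).resolve_left fun h => hr h.1).1
  rintro (a | b) hx
  · simpa [hl] using mem_toLeft.2 hx
  · fin_cases b <;> simp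

/-- The pairs `({v}, vw)` of `∂Δⁿ`: these are the vertices removed by the strong collapse. -/
def IsBad (p : VPair (bdryWithLeaf n v)) : Prop :=
  p.hi.toRight = ∅ ∧ p.lo.toLeft = {v}

lemma IsBad.lo_eq {p : VPair (bdryWithLeaf n v)} (h : IsBad p) : p.lo = {inl v} := by
  rw [← toLeft_disjSum_toRight (u := p.lo), h.2, VPair.toRight_lo_eq_empty h.1]
  ext; simp

lemma toRight_stemPair_hi_ne : (stemPair : VPair (bdryWithLeaf n v)).hi.toRight ≠ ∅ :=
  fun h => inr_notMem_of_toRight_eq_empty h () (by simp [stemPair, edgePair])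

lemma toRight_tipPair_hi_ne : (tipPair : VPair (bdryWithLeaf n v)).hi.toRight ≠ ∅ :=
  fun h => inr_notMem_of_toRight_eq_empty h () (by simp [tipPair, edgePair])

lemma not_isBad_stemPair : ¬ IsBad (stemPair : VPair (bdryWithLeaf n v)) :=
  fun h => toRight_stemPair_hi_ne h.1

lemma not_isBad_tipPair : ¬ IsBad (tipPair : VPair (bdryWithLeaf n v)) :=
  fun h => toRight_tipPair_hi_ne h.1

lemma eq_stemPair_or_eq_tipPair_or_of_not_isBad {p : VPair (bdryWithLeaf n v)} (hp : ¬ IsBad p) :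
    p = stemPair ∨ p = tipPair ∨ p.hi.toRight = ∅ ∧ p.lo.toLeft ≠ {v} :=
  (eq_stemPair_or_eq_tipPair_or p).imp_right
    (Or.imp_right fun hr => ⟨hr, fun hv => hp ⟨hr, hv⟩⟩)

lemma eq_tipPair_of_stemPair_precedes {q : VPair (bdryWithLeaf n v)}
    (h : stemPair.Precedes q) : q = tipPair := by
  have hlo : q.lo = {inr ()} := VPair.lo_eq_of_edgePair_precedes h
  rcases eq_stemPair_or_eq_tipPair_or q with rfl | rfl | hr
  · simp [stemPair, edgePair] at hlo
  · rfl
  · exact absurd (q.lo_sub (hlo ▸ mem_singleton_self _)) (inr_notMem_of_toRight_eq_empty hr ())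

lemma eq_stemPair_or_isBad_of_tipPair_precedes {q : VPair (bdryWithLeaf n v)}
    (h : tipPair.Precedes q) : q = stemPair ∨ IsBad q := by
  have hlo : q.lo = {inl v} := VPair.lo_eq_of_edgePair_precedes h
  rcases eq_stemPair_or_eq_tipPair_or q with rfl | rfl | hr
  · exact Or.inl rfl
  · simp [tipPair, edgePair] at hlo
  · exact Or.inr ⟨hr, by rw [hlo]; ext; simp⟩

lemma eq_pathPair₁_of_pathPair₀_precedes {q : VPair (bdryMinusWithEdge n v)}
    (h : pathPair₀.Precedes q) : q = pathPair₁ := by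
  have hlo : q.lo = {inr 1} := VPair.lo_eq_of_edgePair_precedes h
  rcases eq_pathPair₀_or_eq_pathPair₁_or q with rfl | rfl | hr
  · simp [pathPair₀, edgePair] at hlo
  · rfl
  · exact absurd (q.lo_sub (hlo ▸ mem_singleton_self _)) (inr_notMem_of_toRight_eq_empty hr 1)

lemma eq_pathPair₀_of_pathPair₁_precedes {q : VPair (bdryMinusWithEdge n v)}
    (h : pathPair₁.Precedes q) : q = pathPair₀ := by
  have hlo : q.lo = {inr 0} := VPair.lo_eq_of_edgePair_precedes h
  rcases eq_pathPair₀_or_eq_pathPair₁_or q with rfl | rfl | hr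
  · rfl
  · simp [pathPair₁, edgePair] at hlo
  · exact absurd (q.lo_sub (hlo ▸ mem_singleton_self _)) (inr_notMem_of_toRight_eq_empty hr 0)

lemma compatible_tipPair {x : VPair (bdryWithLeaf n v)} (hx : x.hi.toRight = ∅) :
    tipPair.Compatible x :=
  VPair.compatible_of_mem_of_notMem (mem_singleton_self _) (inr_notMem_of_toRight_eq_empty hx ())

lemma compatible_stemPair {x : VPair (bdryWithLeaf n v)} (hx : x.hi.toRight = ∅)
    (hv : x.lo.toLeft ≠ {v}) : stemPair.Compatible x := by
  have hinr : inr () ∈ (stemPair : VPair (bdryWithLeaf n v)).hi := by simp [stemPair, edgePair]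
  have hx' := inr_notMem_of_toRight_eq_empty hx ()
  refine ⟨fun h => hv ?_, fun h => ?_, fun h => hx' (x.lo_sub (h ▸ hinr)), fun h => hx' (h ▸ hinr)⟩
  · rw [← h]
    ext; simp [stemPair, edgePair]
  · have := x.one_lt_card_hi
    simp [← h, stemPair, edgePair] at this

lemma compatible_pathPair₀ {x : VPair (bdryMinusWithEdge n v)} (hx : x.hi.toRight = ∅) :
    pathPair₀.Compatible x :=
  VPair.compatible_of_mem_of_notMem (mem_singleton_self _) (inr_notMem_of_toRight_eq_empty hx 0)

lemma compatible_pathPair₁ {x : VPair (bdryMinusWithEdge n v)} (hx : x.hi.toRight = ∅) :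
    pathPair₁.Compatible x :=
  VPair.compatible_of_mem_of_notMem (mem_singleton_self _) (inr_notMem_of_toRight_eq_empty hx 1)

lemma faces_insert_tipPair {σ : Finset (VPair (bdryWithLeaf n v))}
    (hσ : (MorseComplex (bdryWithLeaf n v)).faces σ) {b : VPair (bdryWithLeaf n v)}
    (hb : IsBad b) (hbσ : b ∈ σ) : (MorseComplex (bdryWithLeaf n v)).faces (insert tipPair σ) := by
  by_cases htip : tipPair ∈ σ
  · rwa [insert_eq_of_mem htip]
  have hstem : stemPair ∉ σ := fun h =>
    (hσ.2.1 _ h _ hbσ fun e => not_isBad_stemPair (e ▸ hb)).1 hb.lo_eq.symm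
  have hinl : ∀ q ∈ σ, q.hi.toRight = ∅ := fun q hq => by
    rcases eq_stemPair_or_eq_tipPair_or q with rfl | rfl | hr
    · exact absurd hq hstem
    · exact absurd hq htip
    · exact hr
  exact MorseComplex.faces_insert hσ (fun q hq => compatible_tipPair (hinl q hq))
    fun q hq h => inr_notMem_of_toRight_eq_empty (hinl q hq) () (h (mem_singleton_self _))

noncomputable def badPairs (n : ℕ) (v : Fin (n + 1)) : Finset (VPair (bdryWithLeaf n v)) :=
  (Set.toFinite {p | IsBad p}).toFinset

lemma mem_badPairs {p : VPair (bdryWithLeaf n v)} : p ∈ badPairs n v ↔ IsBad p :=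
  Set.Finite.mem_toFinset _

theorem sCTo_disjoint_badPairs :
    SCTo (MorseComplex (bdryWithLeaf n v)).faces
      (fun σ => (MorseComplex (bdryWithLeaf n v)).faces σ ∧ Disjoint σ (badPairs n v)) :=
  SCTo.of_absorbing (MorseComplex.faces_singleton tipPair)
    (fun h => not_isBad_tipPair (mem_badPairs.1 h)) (fun b _ => MorseComplex.faces_singleton b)
    fun _ hb _ hσ hbσ => faces_insert_tipPair hσ (mem_badPairs.1 hb) hbσ

lemma bdryMinusWithEdge_faces_leftCompl {σ : Finset (Fin (n + 1) ⊕ Unit)}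
    (hσ : (bdryWithLeaf n v).faces σ) (hr : σ.toRight = ∅) (hv : σ.toLeft ≠ {v}) :
    (bdryMinusWithEdge n v).faces (leftCompl σ) := by
  rw [sDisjUnion_faces_of_toRight_eq_empty toRight_leftCompl, toLeft_leftCompl,
    bdryMinus_faces_compl]
  refine ⟨(attachLeaf_faces.1 hσ).elim (fun ⟨hne, hsub⟩ => absurd ?_ hv) And.right, hv⟩
  refine (Nonempty.subset_singleton_iff (toLeft_nonempty_of_toRight_eq_empty hr hne)).1
    fun a ha => ?_
  simpa using hsub (mem_toLeft.1 ha)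

lemma bdryWithLeaf_faces_leftCompl {σ : Finset (Fin (n + 1) ⊕ Fin 2)}
    (hσ : (bdryMinusWithEdge n v).faces σ) (hr : σ.toRight = ∅) :
    (bdryWithLeaf n v).faces (leftCompl σ) := by
  refine attachLeaf_faces.2 (Or.inr ⟨toRight_leftCompl, ?_⟩)
  rw [toLeft_leftCompl, bdry_faces_compl]
  exact bdry_faces_of_bdryMinus_faces ((sDisjUnion_faces_of_toRight_eq_empty hr).1 hσ)

lemma toLeft_leftCompl_ne_singleton {σ : Finset (Fin (n + 1) ⊕ Fin 2)}
    (hσ : (bdryMinusWithEdge n v).faces σ) (hr : σ.toRight = ∅) :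
    (leftCompl σ : Finset (Fin (n + 1) ⊕ Unit)).toLeft ≠ {v} := by
  have h := (sDisjUnion_faces_of_toRight_eq_empty hr).1 hσ
  rw [← compl_compl σ.toLeft, bdryMinus_faces_compl] at h
  rw [toLeft_leftCompl]
  exact h.2

lemma toLeft_hi_ne_singleton {p : VPair (bdryWithLeaf n v)} (hr : p.hi.toRight = ∅)
    (hv : p.lo.toLeft ≠ {v}) : p.hi.toLeft ≠ {v} := fun h =>
  hv ((Nonempty.subset_singleton_iff (toLeft_nonempty_of_toRight_eq_empty
    (VPair.toRight_lo_eq_empty hr) p.lo_nonempty)).1 (h ▸ toLeft_subset_toLeft p.lo_sub))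

/-- Inverse to `unreflect` on the pairs that are not bad; bad pairs get the junk value
`pathPair₁`. -/
noncomputable def reflect (p : VPair (bdryWithLeaf n v)) : VPair (bdryMinusWithEdge n v) :=
  if h : p.hi.toRight = ∅ ∧ p.lo.toLeft ≠ {v} then
    p.dual h.1 (bdryMinusWithEdge_faces_leftCompl p.hi_face h.1 (toLeft_hi_ne_singleton h.1 h.2))
      (bdryMinusWithEdge_faces_leftCompl p.lo_face (VPair.toRight_lo_eq_empty h.1) h.2)
  else if p = stemPair then pathPair₀ else pathPair₁

noncomputable def unreflect (q : VPair (bdryMinusWithEdge n v)) : VPair (bdryWithLeaf n v) :=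
  if h : q.hi.toRight = ∅ then
    q.dual h (bdryWithLeaf_faces_leftCompl q.hi_face h)
      (bdryWithLeaf_faces_leftCompl q.lo_face (VPair.toRight_lo_eq_empty h))
  else if q = pathPair₀ then stemPair else tipPair

lemma reflect_stemPair : reflect (stemPair : VPair (bdryWithLeaf n v)) = pathPair₀ := by
  rw [reflect, dif_neg fun h => toRight_stemPair_hi_ne h.1, if_pos rfl]

lemma reflect_tipPair : reflect (tipPair : VPair (bdryWithLeaf n v)) = pathPair₁ := by
  rw [reflect, dif_neg fun h => toRight_tipPair_hi_ne h.1, if_neg stemPair_ne_tipPair.symm]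

lemma isDual_reflect {p : VPair (bdryWithLeaf n v)} (hr : p.hi.toRight = ∅)
    (hv : p.lo.toLeft ≠ {v}) : (reflect p).IsDual p := by
  rw [reflect, dif_pos ⟨hr, hv⟩]
  exact VPair.dual_isDual ..

lemma unreflect_pathPair₀ : unreflect (pathPair₀ : VPair (bdryMinusWithEdge n v)) = stemPair := by
  rw [unreflect,
    dif_neg fun h => inr_notMem_of_toRight_eq_empty h 0 (by simp [pathPair₀, edgePair]),
    if_pos rfl]

lemma unreflect_pathPair₁ : unreflect (pathPair₁ : VPair (bdryMinusWithEdge n v)) = tipPair := by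
  rw [unreflect,
    dif_neg fun h => inr_notMem_of_toRight_eq_empty h 0 (by simp [pathPair₁, edgePair]),
    if_neg pathPair₀_ne_pathPair₁.symm]

lemma isDual_unreflect {q : VPair (bdryMinusWithEdge n v)} (hr : q.hi.toRight = ∅) :
    (unreflect q).IsDual q := by
  rw [unreflect, dif_pos hr]
  exact VPair.dual_isDual ..

lemma toLeft_unreflect_lo_ne {q : VPair (bdryMinusWithEdge n v)} (hr : q.hi.toRight = ∅) :
    (unreflect q).lo.toLeft ≠ {v} := by
  rw [(isDual_unreflect hr).2.1]
  exact toLeft_leftCompl_ne_singleton q.hi_face hr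

lemma not_isBad_unreflect (q : VPair (bdryMinusWithEdge n v)) : ¬ IsBad (unreflect q) := by
  rcases eq_pathPair₀_or_eq_pathPair₁_or q with rfl | rfl | hr
  · rw [unreflect_pathPair₀]
    exact not_isBad_stemPair
  · rw [unreflect_pathPair₁]
    exact not_isBad_tipPair
  · exact fun h => toLeft_unreflect_lo_ne hr h.2

lemma unreflect_reflect {p : VPair (bdryWithLeaf n v)} (hp : ¬ IsBad p) :
    unreflect (reflect p) = p := by
  rcases eq_stemPair_or_eq_tipPair_or_of_not_isBad hp with rfl | rfl | ⟨hr, hv⟩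
  · rw [reflect_stemPair, unreflect_pathPair₀]
  · rw [reflect_tipPair, unreflect_pathPair₁]
  · have h := isDual_reflect hr hv
    exact (isDual_unreflect h.toRight_hi).unique h.symm

lemma reflect_unreflect (q : VPair (bdryMinusWithEdge n v)) : reflect (unreflect q) = q := by
  rcases eq_pathPair₀_or_eq_pathPair₁_or q with rfl | rfl | hr
  · rw [unreflect_pathPair₀, reflect_stemPair]
  · rw [unreflect_pathPair₁, reflect_tipPair]
  · have h := isDual_unreflect hr
    exact (isDual_reflect h.toRight_hi (toLeft_unreflect_lo_ne hr)).unique h.symm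

lemma eq_of_reflect_eq {a b : VPair (bdryWithLeaf n v)} (ha : ¬ IsBad a) (hb : ¬ IsBad b)
    (h : reflect a = reflect b) : a = b := by
  rw [← unreflect_reflect ha, h, unreflect_reflect hb]

lemma faces_fimage_reflect {S : Finset (VPair (bdryWithLeaf n v))}
    (hS : (MorseComplex (bdryWithLeaf n v)).faces S) (hbad : ∀ p ∈ S, ¬ IsBad p) :
    (MorseComplex (bdryMinusWithEdge n v)).faces (fimage reflect S) := by
  have hleaf : ¬ (stemPair ∈ S ∧ tipPair ∈ S) := fun h =>
    not_compatible_stemPair_tipPair (hS.2.1 _ h.1 _ h.2 stemPair_ne_tipPair)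
  refine MorseComplex.faces_fimage reflect hS (fun p => p.hi.toRight = ∅) ?_ ?_ ?_
  · intro a ha b hb hab
    rcases eq_stemPair_or_eq_tipPair_or_of_not_isBad (hbad a ha) with rfl | rfl | ⟨hra, hva⟩ <;>
      rcases eq_stemPair_or_eq_tipPair_or_of_not_isBad (hbad b hb) with rfl | rfl | ⟨hrb, hvb⟩
    all_goals first
      | exact absurd rfl hab.1
      | exact absurd hab not_compatible_stemPair_tipPair
      | exact absurd hab.symm not_compatible_stemPair_tipPair
      | skip
    · rw [reflect_stemPair]
      exact compatible_pathPair₀ (isDual_reflect hrb hvb).toRight_hi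
    · rw [reflect_tipPair]
      exact compatible_pathPair₁ (isDual_reflect hrb hvb).toRight_hi
    · rw [reflect_stemPair]
      exact (compatible_pathPair₀ (isDual_reflect hra hva).toRight_hi).symm
    · rw [reflect_tipPair]
      exact (compatible_pathPair₁ (isDual_reflect hra hva).toRight_hi).symm
    · exact (isDual_reflect hra hva).compatible (isDual_reflect hrb hvb) hab
  · intro a ha b hb h
    rcases eq_stemPair_or_eq_tipPair_or_of_not_isBad (hbad a ha) with rfl | rfl | ⟨hra, -⟩
    · rw [reflect_stemPair] at h
      have hb' : b = tipPair := eq_of_reflect_eq (hbad b hb) not_isBad_tipPair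
        ((eq_pathPair₁_of_pathPair₀_precedes h).trans reflect_tipPair.symm)
      exact absurd ⟨ha, hb' ▸ hb⟩ hleaf
    · rw [reflect_tipPair] at h
      have hb' : b = stemPair := eq_of_reflect_eq (hbad b hb) not_isBad_stemPair
        ((eq_pathPair₀_of_pathPair₁_precedes h).trans reflect_stemPair.symm)
      exact absurd ⟨hb' ▸ hb, ha⟩ hleaf
    · exact hra
  · intro a ha b hb hra hrb h
    exact (isDual_reflect hra fun hv => hbad a ha ⟨hra, hv⟩).precedes
      (isDual_reflect hrb fun hv => hbad b hb ⟨hrb, hv⟩)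
      (hS.2.1 a ha b hb (ne_of_apply_ne reflect h.ne)) h

lemma faces_fimage_unreflect {T : Finset (VPair (bdryMinusWithEdge n v))}
    (hT : (MorseComplex (bdryMinusWithEdge n v)).faces T) :
    (MorseComplex (bdryWithLeaf n v)).faces (fimage unreflect T) := by
  have hpath : ¬ (pathPair₀ ∈ T ∧ pathPair₁ ∈ T) := fun h =>
    not_compatible_pathPair₀_pathPair₁ (hT.2.1 _ h.1 _ h.2 pathPair₀_ne_pathPair₁)
  have hinj : Function.Injective (unreflect : _ → VPair (bdryWithLeaf n v)) :=
    Function.LeftInverse.injective reflect_unreflect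
  refine MorseComplex.faces_fimage unreflect hT (fun q => q.hi.toRight = ∅) ?_ ?_ ?_
  · intro a ha b hb hab
    rcases eq_pathPair₀_or_eq_pathPair₁_or a with rfl | rfl | hra <;>
      rcases eq_pathPair₀_or_eq_pathPair₁_or b with rfl | rfl | hrb
    all_goals first
      | exact absurd rfl hab.1
      | exact absurd hab not_compatible_pathPair₀_pathPair₁
      | exact absurd hab.symm not_compatible_pathPair₀_pathPair₁
      | skip
    · rw [unreflect_pathPair₀]
      exact compatible_stemPair (isDual_unreflect hrb).toRight_hi (toLeft_unreflect_lo_ne hrb)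
    · rw [unreflect_pathPair₁]
      exact compatible_tipPair (isDual_unreflect hrb).toRight_hi
    · rw [unreflect_pathPair₀]
      exact (compatible_stemPair (isDual_unreflect hra).toRight_hi
        (toLeft_unreflect_lo_ne hra)).symm
    · rw [unreflect_pathPair₁]
      exact (compatible_tipPair (isDual_unreflect hra).toRight_hi).symm
    · exact (isDual_unreflect hra).compatible (isDual_unreflect hrb) hab
  · intro a ha b hb h
    rcases eq_pathPair₀_or_eq_pathPair₁_or a with rfl | rfl | hra
    · rw [unreflect_pathPair₀] at h
      have hb' : b = pathPair₁ :=
        hinj ((eq_tipPair_of_stemPair_precedes h).trans unreflect_pathPair₁.symm)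
      exact absurd ⟨ha, hb' ▸ hb⟩ hpath
    · rw [unreflect_pathPair₁] at h
      have hb' : b = pathPair₀ := hinj (((eq_stemPair_or_isBad_of_tipPair_precedes h).resolve_right
        (not_isBad_unreflect b)).trans unreflect_pathPair₀.symm)
      exact absurd ⟨hb' ▸ hb, ha⟩ hpath
    · exact hra
  · intro a ha b hb hra hrb h
    exact (isDual_unreflect hra).precedes (isDual_unreflect hrb)
      (hT.2.1 a ha b hb (ne_of_apply_ne unreflect h.ne)) h

noncomputable def reflectIso :
    ComplexIso (fun σ => (MorseComplex (bdryWithLeaf n v)).faces σ ∧ Disjoint σ (badPairs n v))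
      (MorseComplex (bdryMinusWithEdge n v)).faces where
  toFun := reflect
  invFun := unreflect
  left_inv _ hx := unreflect_reflect fun hb => disjoint_singleton_left.1 hx.2 (mem_badPairs.2 hb)
  right_inv q _ := reflect_unreflect q
  map_face _ hσ := faces_fimage_reflect hσ.1 fun _ hp hb =>
    disjoint_left.1 hσ.2 hp (mem_badPairs.2 hb)
  inv_face _ hτ := ⟨faces_fimage_unreflect hτ, disjoint_left.2 fun _ hp hb => by
    obtain ⟨q, -, rfl⟩ := mem_fimage.1 hp
    exact not_isBad_unreflect q (mem_badPairs.1 hb)⟩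

end BdryWithLeaf

theorem stmt_18_general (n : ℕ) (v : Fin (n + 1)) :
    ∃ G, SCTo (MorseComplex (attachLeaf (bdry n) v)).faces G ∧
      Nonempty (ComplexIso G
        (MorseComplex (sDisjUnion (bdryMinus n v)
          (graphComplex (SimpleGraph.pathGraph 2)))).faces) :=
  ⟨_, BdryWithLeaf.sCTo_disjoint_badPairs, ⟨BdryWithLeaf.reflectIso⟩⟩

/-- `M(∂Δⁿ ∨_v ℓ)` strongly collapses to a complex isomorphic to
`M((∂Δⁿ − π(v)) ⊔ ℓ)`. -/
theorem stmt_18 (n : ℕ) (hn : 1 ≤ n) (v : Fin (n + 1)) :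
    ∃ G, SCTo (MorseComplex (attachLeaf (bdry n) v)).faces G ∧
      Nonempty (ComplexIso G
        (MorseComplex (sDisjUnion (bdryMinus n v)
          (graphComplex (SimpleGraph.pathGraph 2)))).faces) :=
  stmt_18_general n v
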